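/- arXiv:2106.10387 — 2 statements merged into one kernel-verified Lean document; each statement's English description precedes it below -/
import Mathlib

section
/- Fix an integer n ≥ 1 and for each h > 0 let K_h be a random variable with the beta-binomial distribution BB(n, cπ(h), c(1−π(h))). Then lim_{h→0+} h⁻¹·E[K_h] = n·r(t) and lim_{h→0+} h⁻¹·Var[K_h] = (1 + (n−1)/(c+1))·n·r(t). Consequently the infinitesimal dispersion index, defined as the ratio of these two limits, equals 1 + (n−1)/(c+1), which is strictly greater than 1 when n > 1 and equal to 1 when n = 1. -/
/-! Pascal's rule together with `B(a,b) = B(a+1,b) + B(a,b+1)` shows that the weights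
`C(n,k) B(k+a, n−k+b)` sum to `B(a,b)`, and `k C(n,k) = n C(n−1,k−1)` trades a factor `k` for the
shift `a ↦ a+1`. Hence `E[K] = n a/(a+b)` and `E[K(K−1)] = n(n−1) a(a+1)/((a+b)(a+b+1))`, so for
`a = cπ`, `b = c(1−π)` we get `E[K] = nπ` and `Var K = nπ(1−π)(c+n)/(c+1)`. Since `π(0) = 0` and
`π'(0) = r(t)`, dividing by `h` and letting `h → 0⁺` gives both limits, whose ratio is
`(c+n)/(c+1) = 1 + (n−1)/(c+1)`. -/

open scoped BigOperators
open Filter Topology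

/-- The Beta function `B(a,b) = Γ(a)Γ(b)/Γ(a+b)`. -/
noncomputable def betaFn (a b : ℝ) : ℝ := Real.Gamma a * Real.Gamma b / Real.Gamma (a + b)

/-- The pmf of the beta-binomial distribution `BB(n, α, β)`:
`P(K = k) = C(n,k) · B(k+α, n−k+β) / B(α,β)`. -/
noncomputable def bbPmf (n : ℕ) (α β : ℝ) (k : ℕ) : ℝ :=
  (n.choose k : ℝ) * betaFn ((k : ℝ) + α) ((n : ℝ) - (k : ℝ) + β) / betaFn α β

/-- `π(h) = 1 − exp(−∫_t^{t+h} r(s) ds)`. -/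
noncomputable def pih (r : ℝ → ℝ) (t h : ℝ) : ℝ :=
  1 - Real.exp (-(∫ s in t..(t + h), r s))

open Finset

section BetaFunction

variable {a b : ℝ}

lemma betaFn_comm (a b : ℝ) : betaFn a b = betaFn b a := by
  rw [betaFn, betaFn, mul_comm, add_comm]

lemma betaFn_pos (ha : 0 < a) (hb : 0 < b) : 0 < betaFn a b :=
  div_pos (mul_pos (Real.Gamma_pos_of_pos ha) (Real.Gamma_pos_of_pos hb))
    (Real.Gamma_pos_of_pos (add_pos ha hb))

lemma betaFn_add_one_left (ha : a ≠ 0) (hab : a + b ≠ 0) :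
    betaFn (a + 1) b = a / (a + b) * betaFn a b := by
  rw [betaFn, betaFn, add_right_comm, Real.Gamma_add_one ha, Real.Gamma_add_one hab,
    mul_assoc, mul_div_mul_comm]

lemma betaFn_add_one_right (hb : b ≠ 0) (hab : a + b ≠ 0) :
    betaFn a (b + 1) = b / (a + b) * betaFn a b := by
  rw [betaFn_comm, betaFn_add_one_left hb (by rwa [add_comm]), add_comm b, betaFn_comm]

lemma betaFn_eq_add (ha : a ≠ 0) (hb : b ≠ 0) (hab : a + b ≠ 0) :
    betaFn a b = betaFn (a + 1) b + betaFn a (b + 1) := by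
  rw [betaFn_add_one_left ha hab, betaFn_add_one_right hb hab]
  field_simp

end BetaFunction

noncomputable def bbWeight (n : ℕ) (a b : ℝ) (k : ℕ) : ℝ :=
  n.choose k * betaFn (k + a) (n - k + b)

lemma bbPmf_eq_bbWeight_div (n : ℕ) (a b : ℝ) (k : ℕ) :
    bbPmf n a b k = bbWeight n a b k / betaFn a b := rfl

lemma sum_bbWeight (n : ℕ) {a b : ℝ} (ha : 0 < a) (hb : 0 < b) :
    ∑ k ∈ range (n + 1), bbWeight n a b k = betaFn a b := by
  induction n generalizing a b with
  | zero => simp [bbWeight]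
  | succ n ih =>
    let f : ℕ → ℕ → ℝ := fun i j => betaFn (i + a) (j + b)
    have hsplit : ∑ k ∈ range (n + 2), bbWeight (n + 1) a b k =
        ∑ i ∈ range (n + 2), ((n + 1).choose i : ℝ) * f i (n + 1 - i) := by
      refine sum_congr rfl fun i hi => ?_
      simp only [bbWeight, f]
      push_cast [Nat.cast_sub (mem_range_succ_iff.mp hi)]
      ring_nf
    have hleft : ∑ i ∈ range (n + 1), (n.choose i : ℝ) * f i (n + 1 - i) = betaFn a (b + 1) := by
      rw [← ih ha (by linarith)]
      refine sum_congr rfl fun i hi => ?_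
      simp only [bbWeight, f]
      push_cast [Nat.cast_sub (mem_range_succ_iff.mp hi),
        Nat.cast_sub (mem_range_succ_iff.mp hi |>.trans n.le_succ)]
      ring_nf
    have hright : ∑ i ∈ range (n + 1), (n.choose i : ℝ) * f (i + 1) (n - i) = betaFn (a + 1) b := by
      rw [← ih (by linarith) hb]
      refine sum_congr rfl fun i hi => ?_
      simp only [bbWeight, f]
      push_cast [Nat.cast_sub (mem_range_succ_iff.mp hi)]
      ring_nf
    rw [hsplit, sum_choose_succ_mul, hleft, hright,
      betaFn_eq_add ha.ne' hb.ne' (add_pos ha hb).ne', add_comm]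

lemma sum_cast_mul_bbWeight_succ (n : ℕ) (a b : ℝ) (g : ℕ → ℝ) :
    ∑ k ∈ range (n + 2), (k : ℝ) * g k * bbWeight (n + 1) a b k =
      (n + 1) * ∑ k ∈ range (n + 1), g (k + 1) * bbWeight n (a + 1) b k := by
  rw [sum_range_succ', mul_sum]
  simp only [CharP.cast_eq_zero, zero_mul, add_zero]
  refine sum_congr rfl fun k _ => ?_
  have hchoose : ((n : ℝ) + 1) * n.choose k = (n + 1).choose (k + 1) * ((k : ℝ) + 1) := by
    exact_mod_cast Nat.add_one_mul_choose_eq n k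
  simp only [bbWeight]
  push_cast
  rw [show (k : ℝ) + 1 + a = k + (a + 1) by ring,
    show (n : ℝ) + 1 - (k + 1) + b = n - k + b by ring]
  linear_combination (-(g (k + 1) * betaFn (k + (a + 1)) (n - k + b))) * hchoose

lemma sum_cast_mul_bbWeight (n : ℕ) {a b : ℝ} (ha : 0 < a) (hb : 0 < b) :
    ∑ k ∈ range (n + 1), (k : ℝ) * bbWeight n a b k = n * betaFn (a + 1) b := by
  cases n with
  | zero => simp
  | succ m =>
    simpa [sum_bbWeight m (by linarith : 0 < a + 1) hb] using sum_cast_mul_bbWeight_succ m a b 1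

lemma sum_cast_mul_cast_sub_one_mul_bbWeight (n : ℕ) {a b : ℝ} (ha : 0 < a) (hb : 0 < b) :
    ∑ k ∈ range (n + 1), (k : ℝ) * (k - 1) * bbWeight n a b k =
      n * (n - 1) * betaFn (a + 2) b := by
  cases n with
  | zero => simp
  | succ m =>
    rw [sum_cast_mul_bbWeight_succ m a b (fun k => (k : ℝ) - 1)]
    simp only [Nat.cast_add, Nat.cast_one, add_sub_cancel_right]
    rw [sum_cast_mul_bbWeight m (by linarith) hb, add_assoc, one_add_one_eq_two]
    ring

section Moments

variable (n : ℕ) {a b : ℝ}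

lemma sum_cast_mul_bbPmf (ha : 0 < a) (hb : 0 < b) :
    ∑ k ∈ range (n + 1), (k : ℝ) * bbPmf n a b k = n * (a / (a + b)) := by
  have hB := (betaFn_pos ha hb).ne'
  have hab := (add_pos ha hb).ne'
  simp only [bbPmf_eq_bbWeight_div, mul_div_assoc', ← sum_div, sum_cast_mul_bbWeight n ha hb,
    betaFn_add_one_left ha.ne' hab]
  field_simp

lemma sum_cast_sq_mul_bbPmf (ha : 0 < a) (hb : 0 < b) :
    ∑ k ∈ range (n + 1), (k : ℝ) ^ 2 * bbPmf n a b k =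
      n * (n - 1) * (a * (a + 1) / ((a + b) * (a + b + 1))) + n * (a / (a + b)) := by
  have hB := (betaFn_pos ha hb).ne'
  have hab := (add_pos ha hb).ne'
  have hab1 : a + b + 1 ≠ 0 := by linarith
  have hsplit : ∀ k : ℕ, (k : ℝ) ^ 2 * bbPmf n a b k =
      (k : ℝ) * (k - 1) * bbWeight n a b k / betaFn a b + k * bbPmf n a b k := fun k => by
    rw [bbPmf_eq_bbWeight_div]; ring
  have hB2 : betaFn (a + 2) b = (a + 1) / (a + b + 1) * (a / (a + b)) * betaFn a b := by
    rw [show a + 2 = a + 1 + 1 by ring, betaFn_add_one_left (by linarith) (by linarith),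
      betaFn_add_one_left ha.ne' hab, add_right_comm]
    ring
  simp only [hsplit, sum_add_distrib, ← sum_div, sum_cast_mul_cast_sub_one_mul_bbWeight n ha hb,
    sum_cast_mul_bbPmf n ha hb, hB2]
  field_simp

lemma sum_cast_sq_mul_bbPmf_sub_sq (ha : 0 < a) (hb : 0 < b) :
    ∑ k ∈ range (n + 1), (k : ℝ) ^ 2 * bbPmf n a b k -
        (∑ k ∈ range (n + 1), (k : ℝ) * bbPmf n a b k) ^ 2 =
      n * a * b * (a + b + n) / ((a + b) ^ 2 * (a + b + 1)) := by
  have hab := (add_pos ha hb).ne'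
  have hab1 : a + b + 1 ≠ 0 := by linarith
  rw [sum_cast_sq_mul_bbPmf n ha hb, sum_cast_mul_bbPmf n ha hb]
  field_simp
  ring

end Moments

section MeanPrecision

/-! `BB(n, c p, c (1 - p))` has success probability `p` and precision `c`. -/

variable (n : ℕ) {c p : ℝ}

lemma sum_cast_mul_bbPmf_precision (hc : 0 < c) (hp₀ : 0 < p) (hp₁ : p < 1) :
    ∑ k ∈ range (n + 1), (k : ℝ) * bbPmf n (c * p) (c * (1 - p)) k = n * p := by
  rw [sum_cast_mul_bbPmf n (mul_pos hc hp₀) (mul_pos hc (sub_pos.mpr hp₁))]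
  field_simp
  ring

lemma sum_cast_sq_mul_bbPmf_sub_sq_precision (hc : 0 < c) (hp₀ : 0 < p) (hp₁ : p < 1) :
    ∑ k ∈ range (n + 1), (k : ℝ) ^ 2 * bbPmf n (c * p) (c * (1 - p)) k -
        (∑ k ∈ range (n + 1), (k : ℝ) * bbPmf n (c * p) (c * (1 - p)) k) ^ 2 =
      n * p * (1 - p) * ((c + n) / (c + 1)) := by
  rw [sum_cast_sq_mul_bbPmf_sub_sq n (mul_pos hc hp₀) (mul_pos hc (sub_pos.mpr hp₁))]
  have hc1 : c + 1 ≠ 0 := by linarith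
  rw [show c * p + c * (1 - p) = c by ring]
  field_simp

end MeanPrecision

section Pih

variable {r : ℝ → ℝ} (t : ℝ)

lemma pih_zero : pih r t 0 = 0 := by
  simp [pih]

lemma hasDerivAt_pih (hr : Continuous r) : HasDerivAt (pih r t) (r t) 0 := by
  have hint : HasDerivAt (fun h => ∫ s in t..(t + h), r s) (r t) 0 := by
    simpa using (hr.integral_hasStrictDerivAt t (t + 0)).hasDerivAt.comp_const_add t 0
  have hexp := (hint.neg.exp).const_sub 1
  simp only [Pi.neg_apply, add_zero, intervalIntegral.integral_same, neg_zero, Real.exp_zero,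
    one_mul, neg_neg] at hexp
  exact hexp

lemma tendsto_inv_mul_pih (hr : Continuous r) :
    Tendsto (fun h => h⁻¹ * pih r t h) (𝓝[>] 0) (𝓝 (r t)) := by
  simpa [pih_zero] using (hasDerivAt_pih t hr).tendsto_slope_zero_right

lemma tendsto_pih (hr : Continuous r) : Tendsto (pih r t) (𝓝[>] 0) (𝓝 0) := by
  simpa [pih_zero] using ((hasDerivAt_pih t hr).continuousAt.tendsto).mono_left nhdsWithin_le_nhds

lemma pih_pos (hr : Continuous r) (hr_pos : ∀ s, 0 < r s) {h : ℝ} (hh : 0 < h) :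
    0 < pih r t h := by
  have : 0 < ∫ s in t..(t + h), r s :=
    intervalIntegral.intervalIntegral_pos_of_pos_on (hr.intervalIntegrable _ _)
      (fun s _ => hr_pos s) (by linarith)
  simpa [pih] using this

lemma pih_lt_one (h : ℝ) : pih r t h < 1 := by
  simpa [pih] using Real.exp_pos _

end Pih

/-- for `K_h ~ BB(n, cπ(h), c(1−π(h)))`,
`lim_{h→0+} h⁻¹ E[K_h] = n r(t)`, `lim_{h→0+} h⁻¹ Var[K_h] = (1+(n−1)/(c+1)) n r(t)`,
and the infinitesimal dispersion index (the ratio of these two limits) equals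
`1 + (n−1)/(c+1)`, which is `> 1` when `n > 1` and `= 1` when `n = 1`. -/
theorem bbPmf_infinitesimal_dispersion
    (r : ℝ → ℝ) (hr_cont : Continuous r) (hr_pos : ∀ s, 0 < r s)
    (t c : ℝ) (hc : 0 < c) (n : ℕ) (hn : 1 ≤ n) :
    Tendsto (fun h : ℝ => h⁻¹ *
        ∑ k ∈ Finset.range (n + 1),
          (k : ℝ) * bbPmf n (c * pih r t h) (c * (1 - pih r t h)) k)
      (𝓝[>] (0 : ℝ)) (𝓝 ((n : ℝ) * r t)) ∧
    Tendsto (fun h : ℝ => h⁻¹ *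
        ((∑ k ∈ Finset.range (n + 1),
            (k : ℝ) ^ 2 * bbPmf n (c * pih r t h) (c * (1 - pih r t h)) k)
          - (∑ k ∈ Finset.range (n + 1),
              (k : ℝ) * bbPmf n (c * pih r t h) (c * (1 - pih r t h)) k) ^ 2))
      (𝓝[>] (0 : ℝ)) (𝓝 ((1 + ((n : ℝ) - 1) / (c + 1)) * ((n : ℝ) * r t))) ∧
    ((1 + ((n : ℝ) - 1) / (c + 1)) * ((n : ℝ) * r t)) / ((n : ℝ) * r t)
      = 1 + ((n : ℝ) - 1) / (c + 1) ∧
    (1 < n → 1 < 1 + ((n : ℝ) - 1) / (c + 1)) ∧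
    (n = 1 → 1 + ((n : ℝ) - 1) / (c + 1) = 1) := by
  have hpos : ∀ᶠ h in 𝓝[>] (0 : ℝ), 0 < pih r t h :=
    eventually_nhdsWithin_of_forall fun h hh => pih_pos t hr_cont hr_pos hh
  have hq := tendsto_inv_mul_pih t hr_cont
  have hn₀ : (0 : ℝ) < n := by exact_mod_cast hn
  refine ⟨?_, ?_, ?_, fun h1n => ?_, fun h1n => ?_⟩
  · refine (hq.const_mul (n : ℝ)).congr' ?_
    filter_upwards [hpos] with h hp
    rw [sum_cast_mul_bbPmf_precision n hc hp (pih_lt_one t h)]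
    ring
  · have hlimit : (1 + ((n : ℝ) - 1) / (c + 1)) * (n * r t) =
        n * r t * (1 - 0) * ((c + n) / (c + 1)) := by
      field_simp
      ring
    rw [hlimit]
    refine (((hq.const_mul _).mul ((tendsto_pih t hr_cont).const_sub 1)).mul_const _).congr' ?_
    filter_upwards [hpos] with h hp
    rw [sum_cast_sq_mul_bbPmf_sub_sq_precision n hc hp (pih_lt_one t h)]
    ring
  · exact mul_div_cancel_right₀ _ (mul_pos hn₀ (hr_pos t)).ne'
  · have : (1 : ℝ) < n := by exact_mod_cast h1n
    have : 0 < ((n : ℝ) - 1) / (c + 1) := div_pos (by linarith) (by linarith)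
    linarith
  · simp [h1n]
end

section
/- Fix an integer x ≥ 1, and for each h > 0 let (Δ_0^h,…,Δ_m^h) be a random vector with the Dirichlet-multinomial distribution DM(x; cπ_0(h), cπ_1(h),…,cπ_m(h)). Then for each i ∈ {1,…,m}: lim_{h→0+} h⁻¹·E[Δ_i^h] = x·r_i(t) and lim_{h→0+} h⁻¹·Var[Δ_i^h] = (1 + (x−1)/(c+1))·x·r_i(t). Consequently the infinitesimal dispersion index, the ratio of these two limits, equals 1 + (x−1)/(c+1), which is strictly greater than 1 when x > 1 and equal to 1 when x = 1. -/
/-!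
The Dirichlet-multinomial moments are explicit: with `A = ∑ α_j` and `p = α_i / A`,
`E[Δ_i] = x p` and `Var[Δ_i] = x p (1 - p) (x + A) / (1 + A)`. Indeed the pmf is
`∏_j multichoose(α_j, k_j) / multichoose(A, x)`, so the Chu–Vandermonde identity for `multichoose`
sums out the coordinates `j ≠ i`, leaving a beta-binomial law whose factorial moments follow from
`(k + 1) multichoose(a, k + 1) = a multichoose(a + 1, k)`. For `α = alphaVec` one has `A = c` and
`p = π_i(h) = r_i(t) h + o(h)`.
-/

open scoped BigOperators
open Filter Topology Asymptotics

/-- The pmf of the Dirichlet-multinomial distribution `DM(x; α_0,…,α_m)` on vectors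
`k : Fin (m+1) → ℕ` with `∑ k = x`:
`P(k) = [x!/∏ k_i!] · [Γ(∑α)/∏Γ(α_i)] · [∏Γ(k_i+α_i)] / Γ(x+∑α)`. -/
noncomputable def dmPmf (m x : ℕ) (α : Fin (m + 1) → ℝ) (k : Fin (m + 1) → ℕ) : ℝ :=
  ((x.factorial : ℝ) / ∏ i, ((k i).factorial : ℝ)) *
    (Real.Gamma (∑ i, α i) / ∏ i, Real.Gamma (α i)) *
    (∏ i, Real.Gamma ((k i : ℝ) + α i)) / Real.Gamma ((x : ℝ) + ∑ i, α i)

/-- Expectation of `f(Δ_0,…,Δ_m)` under `DM(x; α)`: the sum of `f(k) · P(k)` over all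
nonnegative integer vectors `k` with `∑ k = x`. -/
noncomputable def dmExp (m x : ℕ) (α : Fin (m + 1) → ℝ) (f : (Fin (m + 1) → ℕ) → ℝ) : ℝ :=
  ∑ k ∈ (Fintype.piFinset fun _ : Fin (m + 1) => Finset.range (x + 1)).filter
      (fun k => ∑ j, k j = x), f k * dmPmf m x α k

/-- `π_i(h) = (1 − exp(−∑_j ∫_t^{t+h} r_j(s) ds)) · r_i(t)/∑_j r_j(t)`, for `i = 1,…,m`. -/
noncomputable def pmain (m : ℕ) (r : Fin m → ℝ → ℝ) (t h : ℝ) (i : Fin m) : ℝ :=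
  (1 - Real.exp (-(∑ j, ∫ s in t..(t + h), r j s))) * r i t / ∑ j, r j t

/-- The Dirichlet parameter vector `(cπ_0(h), cπ_1(h),…,cπ_m(h))`, where
`π_0(h) = 1 − ∑_{i=1}^m π_i(h)`; the index `0 : Fin (m+1)` carries `cπ_0(h)`. -/
noncomputable def alphaVec (m : ℕ) (r : Fin m → ℝ → ℝ) (t c h : ℝ) : Fin (m + 1) → ℝ :=
  Fin.cons (c * (1 - ∑ i, pmain m r t h i)) (fun i => c * pmain m r t h i)

open Finset

namespace Ring

variable {R : Type*} [CommRing R] [BinomialRing R]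

attribute [local instance] BinomialRing.toIsAddTorsionFree

open Polynomial in
theorem succ_mul_multichoose_succ (r : R) (k : ℕ) :
    (k + 1) * multichoose r (k + 1) = r * multichoose (r + 1) k := by
  rw [← Nat.cast_succ, ← nsmul_eq_mul, ← nsmul_right_inj (Nat.factorial_ne_zero k), smul_smul,
    mul_comm, ← Nat.factorial_succ, factorial_nsmul_multichoose_eq_ascPochhammer,
    ascPochhammer_succ_left, smeval_X_mul, smeval_comp, smeval_add, smeval_X, smeval_one,
    ← factorial_nsmul_multichoose_eq_ascPochhammer]
  simp only [pow_one, pow_zero, Nat.cast_one, mul_one, nsmul_eq_mul]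
  ring

/-- `Ring.add_choose_eq` at `-r` and `-s`, since `multichoose t k = (-1)^k • choose (-t) k`. -/
theorem multichoose_add (r s : R) (n : ℕ) :
    multichoose (r + s) n = ∑ p ∈ antidiagonal n, multichoose r p.1 * multichoose s p.2 := by
  have hneg (t : R) (k : ℕ) : multichoose t k = Int.negOnePow k • choose (-t) k := by
    rw [choose_neg', smul_smul, ← Int.negOnePow_add, Int.negOnePow_even _ (by simp), one_smul]
  rw [hneg, neg_add, add_choose_eq n (Commute.all _ _), smul_sum]
  refine sum_congr rfl fun p hp => ?_
  rw [hneg, hneg, smul_mul_smul_comm, ← Int.negOnePow_add, ← mem_antidiagonal.1 hp]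
  push_cast
  rfl

end Ring

section PiAntidiag

variable {ι R : Type*} [DecidableEq ι] [CommRing R]

theorem Finset.sum_piAntidiag_cons_mul_prod {i : ι} {s : Finset ι} (hi : i ∉ s) (n : ℕ)
    (g : ℕ → R) (F : ι → ℕ → R) :
    ∑ f ∈ piAntidiag (cons i s hi) n, g (f i) * ∏ j ∈ cons i s hi, F j (f j) =
      ∑ p ∈ antidiagonal n, g p.1 * F i p.1 * ∑ f ∈ piAntidiag s p.2, ∏ j ∈ s, F j (f j) := by
  rw [piAntidiag_cons, sum_disjiUnion]
  refine sum_congr rfl fun p _ => ?_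
  rw [sum_map, mul_sum]
  refine sum_congr rfl fun f hf => ?_
  have hfi : f i = 0 := by
    by_contra h
    exact hi ((mem_piAntidiag.1 hf).2 i h)
  have hfs : ∀ j ∈ s, f j + (if j = i then p.1 else 0) = f j := fun j hj => by
    rw [if_neg (ne_of_mem_of_not_mem hj hi), add_zero]
  simp only [addRightEmbedding_apply, Pi.add_apply, prod_cons, if_pos, hfi, zero_add]
  rw [prod_congr rfl fun j hj => congrArg (F j) (hfs j hj), mul_assoc]

variable [BinomialRing R]

theorem Ring.sum_piAntidiag_prod_multichoose (r : ι → R) (s : Finset ι) (n : ℕ) :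
    ∑ f ∈ piAntidiag s n, ∏ j ∈ s, multichoose (r j) (f j) = multichoose (∑ j ∈ s, r j) n := by
  induction s using Finset.cons_induction generalizing n with
  | empty => rcases n with _ | n <;> simp
  | cons i s hi ih =>
    simpa only [one_mul, ih, sum_cons, multichoose_add] using
      sum_piAntidiag_cons_mul_prod hi n (fun _ => (1 : R)) fun j => multichoose (r j)

theorem Ring.sum_piAntidiag_mul_prod_multichoose (r : ι → R) {s : Finset ι} {i : ι} (hi : i ∈ s)
    (n : ℕ) (g : ℕ → R) :
    ∑ f ∈ piAntidiag s n, g (f i) * ∏ j ∈ s, multichoose (r j) (f j) =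
      ∑ p ∈ antidiagonal n, g p.1 * multichoose (r i) p.1 *
        multichoose (∑ j ∈ s, r j - r i) p.2 := by
  have hs : s = cons i (s.erase i) (notMem_erase i s) := by rw [cons_eq_insert, insert_erase hi]
  rw [← sum_erase_eq_sub hi]
  conv_lhs => rw [hs]
  simp only [sum_piAntidiag_cons_mul_prod, sum_piAntidiag_prod_multichoose]

end PiAntidiag

namespace Ring

variable {R : Type*} [CommRing R] [BinomialRing R]

theorem sum_antidiagonal_succ_mul_multichoose (a b : R) (n : ℕ) (g : ℕ → R) :
    ∑ p ∈ antidiagonal (n + 1), (p.1 : R) * g p.1 * multichoose a p.1 * multichoose b p.2 =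
      a * ∑ p ∈ antidiagonal n, g (p.1 + 1) * multichoose (a + 1) p.1 * multichoose b p.2 := by
  rw [Nat.sum_antidiagonal_succ, mul_sum]
  simp only [Nat.cast_zero, zero_mul, zero_add]
  refine sum_congr rfl fun p _ => ?_
  push_cast
  linear_combination g (p.1 + 1) * multichoose b p.2 * succ_mul_multichoose_succ a p.1

theorem add_mul_sum_antidiagonal_mul_multichoose (a b : R) (n : ℕ) :
    (a + b) * ∑ p ∈ antidiagonal n, (p.1 : R) * multichoose a p.1 * multichoose b p.2 =
      n * a * multichoose (a + b) n := by
  rcases n with _ | n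
  · simp
  · have hshift := sum_antidiagonal_succ_mul_multichoose a b n fun _ => 1
    simp only [mul_one, one_mul, ← multichoose_add, add_right_comm a 1 b] at hshift
    rw [hshift]
    push_cast
    linear_combination (-a) * succ_mul_multichoose_succ (a + b) n

theorem add_mul_add_one_mul_sum_antidiagonal_mul_multichoose (a b : R) (n : ℕ) :
    (a + b) * (a + b + 1) * ∑ p ∈ antidiagonal n,
        (p.1 : R) * (p.1 - 1) * multichoose a p.1 * multichoose b p.2 =
      n * (n - 1) * a * (a + 1) * multichoose (a + b) n := by
  rcases n with _ | n
  · simp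
  · have hshift := sum_antidiagonal_succ_mul_multichoose a b n fun k => (k : R) - 1
    have hmean := add_mul_sum_antidiagonal_mul_multichoose (a + 1) b n
    rw [add_right_comm a 1 b] at hmean
    simp only [Nat.cast_add, Nat.cast_one, add_sub_cancel_right] at hshift
    rw [hshift]
    push_cast
    linear_combination (a + b) * a * hmean - n * a * (a + 1) * succ_mul_multichoose_succ (a + b) n

end Ring

theorem Real.Gamma_natCast_add {a : ℝ} (ha : 0 < a) (n : ℕ) :
    Real.Gamma (n + a) = (ascPochhammer ℝ n).eval a * Real.Gamma a := by
  induction n with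
  | zero => simp
  | succ n ih =>
    rw [Nat.cast_succ, add_right_comm, Real.Gamma_add_one (by positivity), ih,
      ascPochhammer_succ_eval]
    ring

open Polynomial in
theorem Ring.factorial_mul_multichoose_eq_eval_ascPochhammer {R : Type*} [CommRing R]
    [BinomialRing R] (a : R) (n : ℕ) :
    (n.factorial : R) * multichoose a n = (ascPochhammer R n).eval a := by
  rw [← nsmul_eq_mul, factorial_nsmul_multichoose_eq_ascPochhammer,
    ascPochhammer_smeval_eq_eval]

theorem Ring.multichoose_pos {a : ℝ} (ha : 0 < a) (n : ℕ) : 0 < multichoose a n := by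
  have h := ascPochhammer_pos n a ha
  rw [← factorial_mul_multichoose_eq_eval_ascPochhammer] at h
  exact pos_of_mul_pos_right h (by positivity)

section DirichletMultinomial

open Ring

variable {m x : ℕ} {α : Fin (m + 1) → ℝ}

theorem dmPmf_eq_prod_multichoose (hα : ∀ j, 0 < α j) (k : Fin (m + 1) → ℕ) :
    dmPmf m x α k = (∏ j, multichoose (α j) (k j)) / multichoose (∑ j, α j) x := by
  have hA : 0 < ∑ j, α j := sum_pos (fun j _ => hα j) univ_nonempty
  have hΓ (a : ℝ) (ha : 0 < a) (n : ℕ) :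
      Real.Gamma (n + a) = n.factorial * multichoose a n * Real.Gamma a := by
    rw [Real.Gamma_natCast_add ha, ← factorial_mul_multichoose_eq_eval_ascPochhammer]
  have hΓα : ∏ j, Real.Gamma (α j) ≠ 0 :=
    prod_ne_zero_iff.2 fun j _ => (Real.Gamma_pos_of_pos (hα j)).ne'
  have hfac : ∏ j, ((k j).factorial : ℝ) ≠ 0 := prod_ne_zero_iff.2 fun j _ => by positivity
  have hΓA := (Real.Gamma_pos_of_pos hA).ne'
  have hmA := (multichoose_pos hA x).ne'
  unfold dmPmf
  simp only [hΓ _ (hα _), hΓ _ hA, prod_mul_distrib]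
  field_simp

theorem filter_piFinset_range_eq_piAntidiag (n x : ℕ) :
    (Fintype.piFinset fun _ : Fin n => range (x + 1)).filter (fun k => ∑ j, k j = x) =
      piAntidiag univ x := by
  ext k
  simp only [mem_filter, Fintype.mem_piFinset, mem_range, Nat.lt_succ_iff, mem_piAntidiag,
    mem_univ, implies_true, and_true, and_iff_right_iff_imp]
  rintro rfl j
  exact single_le_sum (fun _ _ => Nat.zero_le _) (mem_univ j)

theorem dmExp_comp_coord_eq_sum_antidiagonal (hα : ∀ j, 0 < α j) (i : Fin (m + 1)) (g : ℕ → ℝ) :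
    dmExp m x α (fun k => g (k i)) =
      (∑ p ∈ antidiagonal x, g p.1 * multichoose (α i) p.1 *
        multichoose (∑ j, α j - α i) p.2) / multichoose (∑ j, α j) x := by
  rw [dmExp, filter_piFinset_range_eq_piAntidiag, ← sum_piAntidiag_mul_prod_multichoose α
    (mem_univ i), sum_div]
  refine sum_congr rfl fun k _ => ?_
  rw [dmPmf_eq_prod_multichoose hα, mul_div_assoc]

theorem dmExp_coord (hα : ∀ j, 0 < α j) (i : Fin (m + 1)) :
    dmExp m x α (fun k => (k i : ℝ)) = x * α i / ∑ j, α j := by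
  have hA : 0 < ∑ j, α j := sum_pos (fun j _ => hα j) univ_nonempty
  have hmean := add_mul_sum_antidiagonal_mul_multichoose (α i) (∑ j, α j - α i) x
  rw [add_sub_cancel] at hmean
  rw [dmExp_comp_coord_eq_sum_antidiagonal hα i (fun n => (n : ℝ)),
    div_eq_div_iff (multichoose_pos hA x).ne' hA.ne']
  linear_combination hmean

theorem dmExp_coord_sq (hα : ∀ j, 0 < α j) (i : Fin (m + 1)) :
    dmExp m x α (fun k => (k i : ℝ) ^ 2) =
      x * (x - 1) * α i * (α i + 1) / ((∑ j, α j) * (∑ j, α j + 1)) + x * α i / ∑ j, α j := by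
  have hA : 0 < ∑ j, α j := sum_pos (fun j _ => hα j) univ_nonempty
  have hmean := add_mul_sum_antidiagonal_mul_multichoose (α i) (∑ j, α j - α i) x
  have hfact := add_mul_add_one_mul_sum_antidiagonal_mul_multichoose (α i) (∑ j, α j - α i) x
  rw [add_sub_cancel] at hmean hfact
  have hsq (n : ℕ) : (n : ℝ) ^ 2 = n * (n - 1) + n := by ring
  rw [dmExp_comp_coord_eq_sum_antidiagonal hα i (fun n => (n : ℝ) ^ 2)]
  simp only [hsq, add_mul, sum_add_distrib]
  have := (multichoose_pos hA x).ne'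
  field_simp
  linear_combination hfact + (∑ j, α j + 1) * hmean

theorem dmExp_variance_coord (hα : ∀ j, 0 < α j) (i : Fin (m + 1)) :
    dmExp m x α (fun k => (k i : ℝ) ^ 2) - dmExp m x α (fun k => (k i : ℝ)) ^ 2 =
      x * (α i / ∑ j, α j) * (1 - α i / ∑ j, α j) * (x + ∑ j, α j) / (1 + ∑ j, α j) := by
  have hA : 0 < ∑ j, α j := sum_pos (fun j _ => hα j) univ_nonempty
  rw [dmExp_coord_sq hα, dmExp_coord hα]
  field_simp
  ring

end DirichletMultinomial

section Rates

variable {m : ℕ} {r : Fin m → ℝ → ℝ} {t : ℝ}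

theorem hasDerivAt_one_sub_exp_neg_sum_integral (hr : ∀ j, Continuous (r j)) :
    HasDerivAt (fun h => 1 - Real.exp (-(∑ j, ∫ s in t..(t + h), r j s))) (∑ j, r j t) 0 := by
  have hint (j : Fin m) : HasDerivAt (fun h => ∫ s in t..(t + h), r j s) (r j t) 0 := by
    have hFTC := intervalIntegral.integral_hasDerivAt_right ((hr j).intervalIntegrable t (t + 0))
      ((hr j).stronglyMeasurableAtFilter _ _) (hr j).continuousAt
    simpa using hFTC.comp_const_add t 0
  simpa using ((HasDerivAt.fun_sum fun j _ => hint j).neg.exp).const_sub 1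

theorem tendsto_pmain_nhds_zero (hr : ∀ j, Continuous (r j)) (i : Fin m) :
    Tendsto (fun h => pmain m r t h i) (𝓝 0) (𝓝 0) := by
  have hG := (hasDerivAt_one_sub_exp_neg_sum_integral (t := t) hr).continuousAt.tendsto
  simpa [pmain] using (hG.mul_const (r i t)).div_const (∑ j, r j t)

theorem tendsto_inv_mul_pmain (hr : ∀ j, Continuous (r j)) (hS : ∑ j, r j t ≠ 0) (i : Fin m) :
    Tendsto (fun h => h⁻¹ * pmain m r t h i) (𝓝[≠] 0) (𝓝 (r i t)) := by
  have hslope := hasDerivAt_iff_tendsto_slope_zero.1 (hasDerivAt_one_sub_exp_neg_sum_integral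
    (t := t) hr)
  have hlim := hslope.mul_const (r i t / ∑ j, r j t)
  rw [mul_div_cancel₀ _ hS] at hlim
  refine hlim.congr fun h => ?_
  simp only [zero_add, add_zero, intervalIntegral.integral_same, sum_const_zero, neg_zero,
    Real.exp_zero, sub_self, sub_zero, smul_eq_mul, pmain]
  ring

theorem sum_pmain (hS : ∑ j, r j t ≠ 0) (h : ℝ) :
    ∑ i, pmain m r t h i = 1 - Real.exp (-(∑ j, ∫ s in t..(t + h), r j s)) := by
  simp only [pmain, ← sum_div, ← mul_sum, mul_div_assoc, div_self hS, mul_one]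

theorem sum_alphaVec (c h : ℝ) : ∑ j, alphaVec m r t c h j = c := by
  simp only [alphaVec, Fin.sum_cons, ← mul_sum]
  ring

variable [Nonempty (Fin m)]

theorem pmain_pos (hr : ∀ j, Continuous (r j)) (hr_pos : ∀ j s, 0 < r j s) {h : ℝ} (hh : 0 < h)
    (i : Fin m) : 0 < pmain m r t h i := by
  have hint : 0 < ∑ j, ∫ s in t..(t + h), r j s := sum_pos (fun j _ =>
    intervalIntegral.intervalIntegral_pos_of_pos ((hr j).intervalIntegrable _ _) (hr_pos j)
      (by linarith)) univ_nonempty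
  have hG := sub_pos.2 (Real.exp_lt_one_iff.2 (neg_neg_of_pos hint))
  exact div_pos (mul_pos hG (hr_pos i t)) (sum_pos (fun j _ => hr_pos j t) univ_nonempty)

theorem alphaVec_pos {c : ℝ} (hr : ∀ j, Continuous (r j)) (hr_pos : ∀ j s, 0 < r j s)
    (hc : 0 < c) {h : ℝ} (hh : 0 < h) (j : Fin (m + 1)) : 0 < alphaVec m r t c h j := by
  refine Fin.cases ?_ (fun i => ?_) j
  · have hS : ∑ j, r j t ≠ 0 := (sum_pos (fun j _ => hr_pos j t) univ_nonempty).ne'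
    simp only [alphaVec, Fin.cons_zero, sum_pmain hS, sub_sub_cancel]
    positivity
  · simp only [alphaVec, Fin.cons_succ]
    exact mul_pos hc (pmain_pos hr hr_pos hh i)

end Rates

theorem dm_infinitesimal_dispersion_general
    (m : ℕ) (r : Fin m → ℝ → ℝ)
    (hr_cont : ∀ i, Continuous (r i)) (hr_pos : ∀ i s, 0 < r i s)
    (t c : ℝ) (hc : 0 < c) (x : ℕ) (hx : 1 ≤ x) (i : Fin m) :
    Tendsto (fun h : ℝ => h⁻¹ *
        dmExp m x (alphaVec m r t c h) (fun k => (k i.succ : ℝ)))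
      (𝓝[>] (0 : ℝ)) (𝓝 ((x : ℝ) * r i t)) ∧
    Tendsto (fun h : ℝ => h⁻¹ *
        (dmExp m x (alphaVec m r t c h) (fun k => (k i.succ : ℝ) ^ 2)
          - (dmExp m x (alphaVec m r t c h) (fun k => (k i.succ : ℝ))) ^ 2))
      (𝓝[>] (0 : ℝ)) (𝓝 ((1 + ((x : ℝ) - 1) / (c + 1)) * ((x : ℝ) * r i t))) ∧
    ((1 + ((x : ℝ) - 1) / (c + 1)) * ((x : ℝ) * r i t)) / ((x : ℝ) * r i t)
      = 1 + ((x : ℝ) - 1) / (c + 1) ∧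
    (1 < x → 1 < 1 + ((x : ℝ) - 1) / (c + 1)) ∧
    (x = 1 → 1 + ((x : ℝ) - 1) / (c + 1) = 1) := by
  have : Nonempty (Fin m) := ⟨i⟩
  set π := fun h => pmain m r t h i
  have hα : ∀ᶠ h in 𝓝[>] 0, ∀ j, 0 < alphaVec m r t c h j :=
    eventually_nhdsWithin_of_forall fun h hh => alphaVec_pos hr_cont hr_pos hc hh
  have hratio (h : ℝ) : alphaVec m r t c h i.succ / ∑ j, alphaVec m r t c h j = π h := by
    rw [sum_alphaVec]
    simp only [alphaVec, Fin.cons_succ]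
    exact mul_div_cancel_left₀ _ hc.ne'
  have hπ : Tendsto π (𝓝[>] 0) (𝓝 0) :=
    (tendsto_pmain_nhds_zero hr_cont i).mono_left nhdsWithin_le_nhds
  have hπ' : Tendsto (fun h => h⁻¹ * π h) (𝓝[>] 0) (𝓝 (r i t)) :=
    (tendsto_inv_mul_pmain hr_cont (sum_pos (fun j _ => hr_pos j t) univ_nonempty).ne' i).mono_left
      (nhdsWithin_mono _ fun h hh => ne_of_gt hh)
  have hxr : (x : ℝ) * r i t ≠ 0 := mul_ne_zero (Nat.cast_ne_zero.2 (by omega)) (hr_pos i t).ne'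
  refine ⟨?_, ?_, mul_div_cancel_right₀ _ hxr, fun h1 => ?_, fun h1 => by simp [h1]⟩
  · refine (hπ'.const_mul (x : ℝ)).congr' (hα.mono fun h hα => ?_)
    dsimp only
    rw [dmExp_coord hα, mul_div_assoc, hratio]
    ring
  · have hlim := ((hπ'.const_mul (x : ℝ)).mul (hπ.const_sub 1)).mul_const ((x + c) / (1 + c))
    convert hlim.congr' (hα.mono fun h hα => ?_) using 2
    · field_simp
      ring
    · rw [dmExp_variance_coord hα, hratio, sum_alphaVec]
      ring
  · have : (0 : ℝ) < (x - 1) / (c + 1) := div_pos (sub_pos.2 (by exact_mod_cast h1)) (by linarith)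
    linarith

/-- for `(Δ_0^h,…,Δ_m^h) ~ DM(x; cπ_0(h),…,cπ_m(h))` and each `i ∈ {1,…,m}`,
`lim_{h→0+} h⁻¹ E[Δ_i^h] = x r_i(t)` and
`lim_{h→0+} h⁻¹ Var[Δ_i^h] = (1+(x−1)/(c+1)) x r_i(t)`; the infinitesimal dispersion
index (the ratio of the limits) equals `1+(x−1)/(c+1)`, which is `> 1` when `x > 1`
and `= 1` when `x = 1`. -/
theorem dm_infinitesimal_dispersion
    (m : ℕ) (hm : 1 ≤ m) (r : Fin m → ℝ → ℝ)
    (hr_cont : ∀ i, Continuous (r i)) (hr_pos : ∀ i s, 0 < r i s)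
    (t c : ℝ) (hc : 0 < c) (x : ℕ) (hx : 1 ≤ x) (i : Fin m) :
    Tendsto (fun h : ℝ => h⁻¹ *
        dmExp m x (alphaVec m r t c h) (fun k => (k i.succ : ℝ)))
      (𝓝[>] (0 : ℝ)) (𝓝 ((x : ℝ) * r i t)) ∧
    Tendsto (fun h : ℝ => h⁻¹ *
        (dmExp m x (alphaVec m r t c h) (fun k => (k i.succ : ℝ) ^ 2)
          - (dmExp m x (alphaVec m r t c h) (fun k => (k i.succ : ℝ))) ^ 2))
      (𝓝[>] (0 : ℝ)) (𝓝 ((1 + ((x : ℝ) - 1) / (c + 1)) * ((x : ℝ) * r i t))) ∧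
    ((1 + ((x : ℝ) - 1) / (c + 1)) * ((x : ℝ) * r i t)) / ((x : ℝ) * r i t)
      = 1 + ((x : ℝ) - 1) / (c + 1) ∧
    (1 < x → 1 < 1 + ((x : ℝ) - 1) / (c + 1)) ∧
    (x = 1 → 1 + ((x : ℝ) - 1) / (c + 1) = 1) :=
  dm_infinitesimal_dispersion_general m r hr_cont hr_pos t c hc x hx i
end
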